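/- Let L be an orthomodular ortholattice, let n ≥ 2, and let a₁, …, aₙ ∈ L. Then (a₁ ≡ a₂) ⊓ (a₂ ≡ a₃) ⊓ … ⊓ (aₙ₋₁ ≡ aₙ) = (a₁ ⊓ a₂ ⊓ … ⊓ aₙ) ⊔ (a₁ᶜ ⊓ a₂ᶜ ⊓ … ⊓ aₙᶜ). -/

import Mathlib

/-- An ortholattice: a bounded lattice with an orthocomplementation. -/
class Ortholattice (α : Type*) extends Lattice α, BoundedOrder α, Compl α where
  compl_compl : ∀ x : α, xᶜᶜ = x
  compl_antitone : ∀ x y : α, x ≤ y → yᶜ ≤ xᶜ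
  inf_compl : ∀ x : α, x ⊓ xᶜ = ⊥
  sup_compl : ∀ x : α, x ⊔ xᶜ = ⊤

/-- The Sasaki implication `a →₁ b = aᶜ ⊔ (a ⊓ b)`. -/
def olImp1 {α : Type*} [Ortholattice α] (a b : α) : α := aᶜ ⊔ (a ⊓ b)

/-- The identity operation `a ≡ b = (a ⊓ b) ⊔ (aᶜ ⊓ bᶜ)`. -/
def olEquiv {α : Type*} [Ortholattice α] (a b : α) : α := (a ⊓ b) ⊔ (aᶜ ⊓ bᶜ)

/-!
In an orthomodular lattice the elements commuting with a fixed `y` (those with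
`x = (x ⊓ y) ⊔ (x ⊓ yᶜ)`) are closed under `⊔`, `⊓` and `ᶜ`, so a meet of joins `p ⊔ q` with
`p ≤ y`, `q ≤ yᶜ` is computed separately below `y` and below `yᶜ`. By induction, the chain of
identities up to `aₙ` is `P ⊔ Q` with `P = a₁ ⊓ ⋯ ⊓ aₙ ≤ aₙ` and `Q = a₁ᶜ ⊓ ⋯ ⊓ aₙᶜ ≤ aₙᶜ`, and
`aₙ ≡ aₙ₊₁ = (aₙ ⊓ aₙ₊₁) ⊔ (aₙᶜ ⊓ aₙ₊₁ᶜ)` splits along `aₙ` in the same way; so their meet is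
`(P ⊓ aₙ₊₁) ⊔ (Q ⊓ aₙ₊₁ᶜ)`.
-/

namespace Ortholattice

def Orthomodular (α : Type*) [Ortholattice α] : Prop :=
  ∀ a b : α, a ≤ b → a ⊔ (aᶜ ⊓ b) = b

variable {α : Type*} [Ortholattice α]

attribute [simp] Ortholattice.compl_compl

lemma le_compl_comm {x y : α} (h : x ≤ yᶜ) : y ≤ xᶜ := by
  simpa using compl_antitone _ _ h

lemma inf_eq_bot_of_le_compl {x y : α} (h : x ≤ yᶜ) : x ⊓ y = ⊥ :=
  le_bot_iff.mp <| (inf_le_inf_right y h).trans_eq <| by rw [inf_comm, inf_compl]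

lemma compl_le_comm {x y : α} (h : xᶜ ≤ y) : yᶜ ≤ x := by
  simpa using compl_antitone _ _ h

lemma compl_inf (x y : α) : (x ⊓ y)ᶜ = xᶜ ⊔ yᶜ := by
  refine le_antisymm ?_ (sup_le (compl_antitone _ _ inf_le_left) (compl_antitone _ _ inf_le_right))
  exact compl_le_comm (le_inf (compl_le_comm le_sup_left) (compl_le_comm le_sup_right))

lemma compl_sup (x y : α) : (x ⊔ y)ᶜ = xᶜ ⊓ yᶜ := by
  simpa using (congrArg compl (compl_inf xᶜ yᶜ)).symm

def Commutes (x y : α) : Prop :=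
  x = (x ⊓ y) ⊔ (x ⊓ yᶜ)

lemma commutes_of_le {x y : α} (h : x ≤ y) : Commutes x y := by
  rw [Commutes, inf_eq_left.mpr h, sup_eq_left.mpr inf_le_left]

lemma commutes_of_le_compl {x y : α} (h : x ≤ yᶜ) : Commutes x y := by
  rw [Commutes, inf_eq_left.mpr h, inf_eq_bot_of_le_compl h, bot_sup_eq]

namespace Commutes

lemma sup {x x' y : α} (h : Commutes x y) (h' : Commutes x' y) : Commutes (x ⊔ x') y := by
  refine le_antisymm ?_ (sup_le inf_le_left inf_le_left)
  calc x ⊔ x' ≤ ((x ⊓ y) ⊔ (x ⊓ yᶜ)) ⊔ ((x' ⊓ y) ⊔ (x' ⊓ yᶜ)) := sup_le_sup h.le h'.le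
    _ ≤ ((x ⊔ x') ⊓ y) ⊔ ((x ⊔ x') ⊓ yᶜ) := by
      apply sup_le <;> apply sup_le_sup <;> gcongr <;> simp

lemma compl_right {x y : α} (h : Commutes x y) : Commutes x yᶜ := by
  rwa [Commutes, Ortholattice.compl_compl, sup_comm]

lemma symm (hOM : Orthomodular α) {x y : α} (h : Commutes x y) : Commutes y x := by
  have hdecomp : (x ⊓ y) ⊔ ((x ⊓ y)ᶜ ⊓ y) = y := hOM _ _ inf_le_right
  have hrest : (x ⊓ y)ᶜ ⊓ y ≤ xᶜ := by
    apply le_compl_comm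
    calc x = (x ⊓ y) ⊔ (x ⊓ yᶜ) := h
      _ ≤ (x ⊓ y) ⊔ yᶜ := sup_le_sup_left inf_le_right _
      _ = ((x ⊓ y)ᶜ ⊓ y)ᶜ := by rw [compl_inf, Ortholattice.compl_compl]
  refine le_antisymm ?_ (sup_le inf_le_left inf_le_left)
  calc y = (x ⊓ y) ⊔ ((x ⊓ y)ᶜ ⊓ y) := hdecomp.symm
    _ ≤ (y ⊓ x) ⊔ (y ⊓ xᶜ) := sup_le_sup (inf_comm x y).le (le_inf inf_le_right hrest)

lemma compl_left (hOM : Orthomodular α) {x y : α} (h : Commutes x y) : Commutes xᶜ y :=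
  (h.symm hOM).compl_right.symm hOM

lemma inf (hOM : Orthomodular α) {x x' y : α} (h : Commutes x y) (h' : Commutes x' y) :
    Commutes (x ⊓ x') y := by
  simpa [compl_sup] using ((h.compl_left hOM).sup (h'.compl_left hOM)).compl_left hOM

end Commutes

lemma Orthomodular.inf_compl_sup (hOM : Orthomodular α) {a b : α} (h : a ≤ bᶜ) :
    bᶜ ⊓ (b ⊔ a) = a := by
  have h' : b ⊔ (bᶜ ⊓ aᶜ) = aᶜ := by simpa using hOM b aᶜ (le_compl_comm h)
  simpa [compl_sup, compl_inf] using congrArg compl h'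

lemma Orthomodular.inf_sup_eq_left (hOM : Orthomodular α) {p q y : α} (hp : p ≤ y)
    (hq : q ≤ yᶜ) : y ⊓ (p ⊔ q) = p := by
  have hpq : q ≤ pᶜ := hq.trans (compl_antitone _ _ hp)
  have hrest : pᶜ ⊓ (y ⊓ (p ⊔ q)) = ⊥ := by
    rw [inf_left_comm, hOM.inf_compl_sup hpq, inf_comm]
    exact inf_eq_bot_of_le_compl hq
  rw [← hOM p _ (le_inf hp le_sup_left), hrest, sup_bot_eq]

lemma Orthomodular.sup_inf_sup_of_split (hOM : Orthomodular α) {p q p' q' y : α} (hp : p ≤ y)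
    (hq : q ≤ yᶜ) (hp' : p' ≤ y) (hq' : q' ≤ yᶜ) :
    (p ⊔ q) ⊓ (p' ⊔ q') = (p ⊓ p') ⊔ (q ⊓ q') := by
  have hcomm : Commutes ((p ⊔ q) ⊓ (p' ⊔ q')) y :=
    ((commutes_of_le hp).sup (commutes_of_le_compl hq)).inf hOM
      ((commutes_of_le hp').sup (commutes_of_le_compl hq'))
  have hp_cc : p ≤ yᶜᶜ := by simpa using hp
  have hp'_cc : p' ≤ yᶜᶜ := by simpa using hp'
  have hy : y ⊓ ((p ⊔ q) ⊓ (p' ⊔ q')) = p ⊓ p' := by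
    rw [inf_inf_distrib_left, hOM.inf_sup_eq_left hp hq, hOM.inf_sup_eq_left hp' hq']
  have hyc : yᶜ ⊓ ((p ⊔ q) ⊓ (p' ⊔ q')) = q ⊓ q' := by
    rw [inf_inf_distrib_left, sup_comm p, sup_comm p', hOM.inf_sup_eq_left hq hp_cc,
      hOM.inf_sup_eq_left hq' hp'_cc]
  refine hcomm.trans ?_
  rw [inf_comm _ y, inf_comm _ yᶜ, hy, hyc]

lemma Orthomodular.sup_inf_olEquiv (hOM : Orthomodular α) {p q y z : α} (hp : p ≤ y)
    (hq : q ≤ yᶜ) : (p ⊔ q) ⊓ olEquiv y z = (p ⊓ z) ⊔ (q ⊓ zᶜ) := by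
  rw [olEquiv, hOM.sup_inf_sup_of_split hp hq inf_le_left inf_le_left, ← inf_assoc,
    inf_eq_left.mpr hp, ← inf_assoc, inf_eq_left.mpr hq]

end Ortholattice

lemma Fin.inf_univ_castSucc {α : Type*} [SemilatticeInf α] [OrderTop α] {n : ℕ}
    (f : Fin (n + 1) → α) :
    Finset.univ.inf f = (Finset.univ.inf fun i : Fin n => f i.castSucc) ⊓ f (Fin.last n) := by
  rw [Fin.univ_castSuccEmb, Finset.inf_cons, Finset.inf_map, inf_comm]
  rfl

/-- In an orthomodular ortholattice, the chained identity on n ≥ 2 variables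
(here n = m + 2) equals `(a₁ ⊓ ⋯ ⊓ aₙ) ⊔ (a₁ᶜ ⊓ ⋯ ⊓ aₙᶜ)`. -/
theorem stmt_7 (α : Type*) [Ortholattice α]
    (hOM : ∀ a b : α, a ≤ b → a ⊔ (aᶜ ⊓ b) = b)
    (m : ℕ) (a : Fin (m + 2) → α) :
    (Finset.univ.inf fun i : Fin (m + 1) => olEquiv (a i.castSucc) (a i.succ)) =
      (Finset.univ.inf fun i => a i) ⊔ (Finset.univ.inf fun i => (a i)ᶜ) := by
  induction m with
  | zero => simp [Fin.inf_univ_castSucc, olEquiv]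
  | succ m ih =>
    have hP : (Finset.univ.inf fun i => a (Fin.castSucc i)) ≤ a (Fin.last (m + 1)).castSucc :=
      Finset.inf_le (Finset.mem_univ _)
    have hQ :
        (Finset.univ.inf fun i => (a (Fin.castSucc i))ᶜ) ≤ (a (Fin.last (m + 1)).castSucc)ᶜ :=
      Finset.inf_le (Finset.mem_univ _)
    rw [Fin.inf_univ_castSucc, Fin.inf_univ_castSucc a, Fin.inf_univ_castSucc fun i => (a i)ᶜ]
    simp only [Fin.succ_castSucc, Fin.succ_last]
    rw [ih (fun i => a i.castSucc)]
    exact Ortholattice.Orthomodular.sup_inf_olEquiv hOM hP hQ
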